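/- arXiv:2307.01679 — 5 statements merged into one kernel-verified Lean document; each statement's English description precedes it below -/
import Mathlib

section
/- Let $\tfrac13<\gamma\le\tfrac12$, $\eta\ge 0$, $\epsilon>0$ with $\eta+\epsilon<\gamma$, and $i\in\{0,1,2\}$. There exists a constant $\tilde M<\infty$, depending only on $\gamma,\eta,\epsilon,i$, with the following property: for every $s<t$ and every nonnegative superadditive function $W$ on the subintervals of $[s,t]$, with dyadic points $\tau^n_m := s+\tfrac{n}{2^m}(t-s)$, one has $\sum_{m\ge1}\sum_{0\le n<2^m}\Big(1-\tfrac{2n}{2^{m+1}}\Big)^{\gamma(i-2)-\eta}\Big(\tfrac{1}{2^{m+1}}\Big)^{2\gamma+\eta+\epsilon}\,W(\tau^{2n+1}_{m+1},\tau^{2n+2}_{m+1})^{\gamma-\eta-\epsilon} \le \tilde M\, W(s,t)^{\gamma-\eta-\epsilon}$. -/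
/-!
Write `θ = γ - η - ε` and `N = 2 ^ (m + 1)` for the number of intervals at level `m`. Hölder's
inequality with exponents `1 / (1 - θ)` and `1 / θ` bounds the level-`m` sum by
`(∑ₖ weightₖ ^ (1 / (1 - θ))) ^ (1 - θ) * (∑ₖ Wₖ) ^ θ`. Superadditivity gives `∑ₖ Wₖ ≤ W(s, t)`,
and the weight sum is a Riemann sum of `∫₀¹ (1 - x) ^ q dx` for an exponent `q > -1`. This makes
the level-`m` sum `O(N ^ (-κ)) W(s, t) ^ θ` with `κ > 0` (here `γ > 1/3` enters), so the sum over
`m` is dominated by a geometric series.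
-/

open Finset

lemma sum_range_add_one_rpow_le {q : ℝ} (hq1 : -1 < q) (hq0 : q ≤ 0) (N : ℕ) :
    ∑ j ∈ range N, ((j : ℝ) + 1) ^ q ≤ (N : ℝ) ^ (1 + q) / (1 + q) := by
  have hq : 0 < 1 + q := by linarith
  cases N with
  | zero => simp [Real.zero_rpow hq.ne']
  | succ n =>
    have hanti : AntitoneOn (fun x : ℝ => x ^ q) (Set.Icc 1 (1 + n)) :=
      (Real.antitoneOn_rpow_Ioi_of_exponent_nonpos hq0).mono fun x hx =>
        Set.mem_Ioi.2 (by linarith [hx.1])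
    have hcomp := hanti.sum_le_integral
    rw [integral_rpow (Or.inl hq1), Real.one_rpow] at hcomp
    have hle : 1 + ((1 + n : ℝ) ^ (q + 1) - 1) / (q + 1) ≤ ((n : ℝ) + 1) ^ (1 + q) / (1 + q) := by
      rw [add_comm q 1, add_comm (n : ℝ) 1, one_add_div hq.ne', div_le_div_iff_of_pos_right hq]
      linarith
    have hshift : ∑ j ∈ range n, (((j + 1 : ℕ) : ℝ) + 1) ^ q
        = ∑ j ∈ range n, (1 + ((j + 1 : ℕ) : ℝ)) ^ q :=
      sum_congr rfl fun j _ => by rw [add_comm]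
    rw [sum_range_succ', hshift, Nat.cast_zero, zero_add, Real.one_rpow, Nat.cast_succ]
    linarith

lemma sum_mul_rpow_le {ι : Type*} (s : Finset ι) {θ : ℝ} (hθ0 : 0 < θ) (hθ1 : θ < 1)
    {f g : ι → ℝ} (hf : ∀ i ∈ s, 0 ≤ f i) (hg : ∀ i ∈ s, 0 ≤ g i) :
    ∑ i ∈ s, f i * g i ^ θ ≤ (∑ i ∈ s, f i ^ (1 - θ)⁻¹) ^ (1 - θ) * (∑ i ∈ s, g i) ^ θ := by
  have hholder := Real.inner_le_Lp_mul_Lq_of_nonneg s (.one_sub_inv_inv hθ0 hθ1) hf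
    (fun i hi => Real.rpow_nonneg (hg i hi) θ)
  have hg' : ∑ i ∈ s, (g i ^ θ) ^ θ⁻¹ = ∑ i ∈ s, g i := sum_congr rfl fun i hi => by
    rw [← Real.rpow_mul (hg i hi), mul_inv_cancel₀ hθ0.ne', Real.rpow_one]
  rwa [one_div, one_div, inv_inv, inv_inv, hg'] at hholder

lemma sum_one_sub_div_rpow_le {q₀ q : ℝ} (hq₀ : q₀ ≤ q) (hq1 : -1 < q) (hq0 : q ≤ 0) {N : ℕ}
    (hN : 0 < N) :
    ∑ k ∈ range N, (1 - k / N : ℝ) ^ q₀ ≤ (N : ℝ) ^ (1 + q) / (1 + q) / (N : ℝ) ^ q₀ := by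
  have hNpos : (0 : ℝ) < N := by exact_mod_cast hN
  have hreflect : ∑ k ∈ range N, ((N : ℝ) - k) ^ q₀ = ∑ j ∈ range N, ((j : ℝ) + 1) ^ q₀ := by
    refine (sum_congr rfl fun k hk => ?_).trans
      (sum_range_reflect (fun j : ℕ => ((j : ℝ) + 1) ^ q₀) N)
    rw [← Nat.cast_add_one, show N - 1 - k + 1 = N - k by grind,
      Nat.cast_sub (mem_range.1 hk).le]
  calc ∑ k ∈ range N, (1 - k / N : ℝ) ^ q₀
      = (∑ k ∈ range N, ((N : ℝ) - k) ^ q₀) / (N : ℝ) ^ q₀ := by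
        rw [sum_div]
        refine sum_congr rfl fun k hk => ?_
        have hk : (k : ℝ) ≤ N := by exact_mod_cast (mem_range.1 hk).le
        rw [one_sub_div hNpos.ne', Real.div_rpow (by linarith) hNpos.le]
    _ ≤ (∑ j ∈ range N, ((j : ℝ) + 1) ^ q) / (N : ℝ) ^ q₀ := by
        rw [hreflect]
        gcongr with j
        exact le_add_of_nonneg_left j.cast_nonneg
    _ ≤ (N : ℝ) ^ (1 + q) / (1 + q) / (N : ℝ) ^ q₀ := by
        gcongr
        exact sum_range_add_one_rpow_le hq1 hq0 N

lemma one_sub_div_nonneg_of_mem_range {N k : ℕ} (hk : k ∈ range N) : 0 ≤ (1 - k / N : ℝ) := by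
  rw [sub_nonneg]
  exact div_le_one_of_le₀ (by exact_mod_cast (mem_range.1 hk).le) N.cast_nonneg

lemma sum_one_sub_div_rpow_mul_rpow_le {θ a b q : ℝ} (hθ0 : 0 < θ) (hθ1 : θ < 1)
    (haq : a / (1 - θ) ≤ q) (hq1 : -1 < q) (hq0 : q ≤ 0) {N : ℕ} (hN : 0 < N) {V : ℕ → ℝ}
    (hV : ∀ k ∈ range N, 0 ≤ V k) :
    ∑ k ∈ range N, (1 - k / N : ℝ) ^ a * (1 / (2 * N)) ^ b * V k ^ θ
      ≤ 2 ^ (-b) / (1 + q) ^ (1 - θ) * (N : ℝ) ^ ((1 + q) * (1 - θ) - a - b)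
        * (∑ k ∈ range N, V k) ^ θ := by
  have hNpos : (0 : ℝ) < N := by exact_mod_cast hN
  have hq : 0 < 1 + q := by linarith
  have hpow : ∀ {x : ℝ} (c : ℝ), 0 ≤ x → (x ^ (c * (1 - θ)⁻¹)) ^ (1 - θ) = x ^ c := fun c hx => by
    rw [← Real.rpow_mul hx, mul_assoc, inv_mul_cancel₀ (by linarith), mul_one]
  have hweights : ∑ k ∈ range N, ((1 - k / N : ℝ) ^ a * (1 / (2 * N)) ^ b) ^ (1 - θ)⁻¹
      ≤ (1 / (2 * N)) ^ (b * (1 - θ)⁻¹) * (N ^ (1 + q) / (1 + q) / N ^ (a * (1 - θ)⁻¹)) := by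
    calc ∑ k ∈ range N, ((1 - k / N : ℝ) ^ a * (1 / (2 * N)) ^ b) ^ (1 - θ)⁻¹
        = (1 / (2 * N)) ^ (b * (1 - θ)⁻¹) * ∑ k ∈ range N, (1 - k / N : ℝ) ^ (a * (1 - θ)⁻¹) := by
          rw [mul_sum]
          refine sum_congr rfl fun k hk => ?_
          rw [Real.mul_rpow (Real.rpow_nonneg (one_sub_div_nonneg_of_mem_range hk) a) (by positivity),
            ← Real.rpow_mul (one_sub_div_nonneg_of_mem_range hk), ← Real.rpow_mul (by positivity), mul_comm]
      _ ≤ _ := by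
          gcongr
          exact sum_one_sub_div_rpow_le (by rwa [← div_eq_mul_inv]) hq1 hq0 hN
  calc ∑ k ∈ range N, (1 - k / N : ℝ) ^ a * (1 / (2 * N)) ^ b * V k ^ θ
      ≤ (∑ k ∈ range N, ((1 - k / N : ℝ) ^ a * (1 / (2 * N)) ^ b) ^ (1 - θ)⁻¹) ^ (1 - θ)
          * (∑ k ∈ range N, V k) ^ θ :=
        sum_mul_rpow_le _ hθ0 hθ1 (fun k hk => by have := one_sub_div_nonneg_of_mem_range hk; positivity) hV
    _ ≤ ((1 / (2 * N)) ^ (b * (1 - θ)⁻¹) * (N ^ (1 + q) / (1 + q) / N ^ (a * (1 - θ)⁻¹)))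
          ^ (1 - θ) * (∑ k ∈ range N, V k) ^ θ := by
        have := sum_nonneg hV
        gcongr
        exact sum_nonneg fun k hk => by have := one_sub_div_nonneg_of_mem_range hk; positivity
    _ = 2 ^ (-b) / (1 + q) ^ (1 - θ) * (N : ℝ) ^ ((1 + q) * (1 - θ) - a - b)
          * (∑ k ∈ range N, V k) ^ θ := by
      rw [Real.mul_rpow (by positivity) (by positivity), hpow b (by positivity),
        Real.div_rpow (x := N ^ (1 + q) / (1 + q)) (by positivity) (by positivity),
        hpow a hNpos.le, Real.div_rpow (x := N ^ (1 + q)) (by positivity) (by positivity),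
        ← Real.rpow_mul hNpos.le, Real.rpow_sub hNpos, Real.rpow_sub hNpos, one_div,
        Real.inv_rpow (by positivity), Real.mul_rpow zero_le_two hNpos.le,
        Real.rpow_neg zero_le_two]
      field_simp

def SuperadditiveOn (W : ℝ → ℝ → ℝ) (s t : ℝ) : Prop :=
  (∀ u v, s ≤ u → u ≤ v → v ≤ t → 0 ≤ W u v) ∧
    ∀ u v r, s ≤ u → u ≤ v → v ≤ r → r ≤ t → W u v + W v r ≤ W u r

namespace SuperadditiveOn

variable {W : ℝ → ℝ → ℝ} {s t : ℝ} {x : ℝ → ℝ}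

lemma sum_le (hW : SuperadditiveOn W s t) (hx : Monotone x) (hs : s ≤ x 0) {n : ℕ}
    (ht : x n ≤ t) : ∑ k ∈ range n, W (x k) (x (k + 1)) ≤ W (x 0) (x n) := by
  induction n with
  | zero => simpa using hW.1 _ _ hs le_rfl (by simpa using ht)
  | succ n ih =>
    have hn : x n ≤ x (n + 1) := hx (by linarith)
    rw [sum_range_succ, Nat.cast_succ]
    have hsplit := hW.2 _ _ _ hs (hx n.cast_nonneg) hn (by simpa using ht)
    linarith [ih (hn.trans (by simpa using ht))]

lemma sum_odd_le (hW : SuperadditiveOn W s t) (hx : Monotone x) (hs : s ≤ x 0) {n : ℕ}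
    (ht : x (2 * n) ≤ t) :
    ∑ k ∈ range n, W (x (2 * k + 1)) (x (2 * k + 2)) ≤ W (x 0) (x (2 * n)) := by
  have hx2 : Monotone fun y => x (2 * y) := fun y z h => hx (by linarith)
  calc ∑ k ∈ range n, W (x (2 * k + 1)) (x (2 * k + 2))
      ≤ ∑ k ∈ range n, W (x (2 * k)) (x (2 * (k + 1))) := by
        refine sum_le_sum fun k hk => ?_
        have hk : (k : ℝ) + 1 ≤ n := by exact_mod_cast mem_range.1 hk
        have hmid := hW.1 (x (2 * k)) (x (2 * k + 1)) (hs.trans (hx (by positivity)))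
          (hx (by linarith)) ((hx (by linarith)).trans ht)
        have hsplit := hW.2 (x (2 * k)) (x (2 * k + 1)) (x (2 * k + 2))
          (hs.trans (hx (by positivity))) (hx (by linarith)) (hx (by linarith))
          ((hx (by linarith)).trans ht)
        rw [mul_add_one]
        linarith
    _ ≤ W (x 0) (x (2 * n)) := by simpa using hW.sum_le hx2 (by simpa using hs) ht

lemma sum_dyadic_le (hW : SuperadditiveOn W s t) (hst : s ≤ t) {θ a b q : ℝ} (hθ0 : 0 < θ)
    (hθ1 : θ < 1) (haq : a / (1 - θ) ≤ q) (hq1 : -1 < q) (hq0 : q ≤ 0) {N : ℕ} (hN : 0 < N)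
    {d : ℝ} (hd : d = 2 * N) :
    ∑ k ∈ range N, ENNReal.ofReal ((1 - 2 * (k : ℝ) / d) ^ a * ((1 : ℝ) / d) ^ b *
        W (s + (2 * (k : ℝ) + 1) / d * (t - s)) (s + (2 * (k : ℝ) + 2) / d * (t - s)) ^ θ)
      ≤ ENNReal.ofReal (2 ^ (-b) / (1 + q) ^ (1 - θ) * (N : ℝ) ^ ((1 + q) * (1 - θ) - a - b)
        * W s t ^ θ) := by
  subst hd
  set x : ℝ → ℝ := fun y => s + y / (2 * N) * (t - s) with hx_def
  have hx : Monotone x := fun y z h => by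
    simp only [hx_def]
    gcongr
  have hx0 : x 0 = s := by simp [hx_def]
  have hxN : x (2 * N) = t := by
    simp only [hx_def]
    field_simp
    ring
  have hV : ∀ k ∈ range N, 0 ≤ W (x (2 * k + 1)) (x (2 * k + 2)) := fun k hk => by
    have hk : (k : ℝ) + 1 ≤ N := by exact_mod_cast mem_range.1 hk
    exact hW.1 _ _ (hx0 ▸ hx (by positivity)) (hx (by linarith)) (hxN ▸ hx (by linarith))
  have hpartition : ∑ k ∈ range N, W (x (2 * k + 1)) (x (2 * k + 2)) ≤ W s t := by
    simpa only [hx0, hxN] using hW.sum_odd_le hx hx0.ge hxN.le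
  simp_rw [mul_div_mul_left _ _ (two_ne_zero' ℝ)]
  rw [← ENNReal.ofReal_sum_of_nonneg fun k hk => by
    have := one_sub_div_nonneg_of_mem_range hk; have := hV k hk; positivity]
  refine ENNReal.ofReal_le_ofReal ?_
  calc _ ≤ _ := sum_one_sub_div_rpow_mul_rpow_le hθ0 hθ1 haq hq1 hq0 hN hV
    _ ≤ _ := by
      have hq : 0 < 1 + q := by linarith
      gcongr
      exact sum_nonneg hV

end SuperadditiveOn

/-- When `a / (1 - θ) ≤ -1` the integral `∫₀¹ (1 - x) ^ (a / (1 - θ)) dx` diverges, so the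
exponent is raised to some `q > -1`; the last conjunct keeps the level sums decaying in `N`. -/
lemma exists_integrable_exponent {θ a b δ : ℝ} (hθ1 : θ < 1) (ha : a ≤ 0) (hb : 1 - θ < b)
    (hδ : 0 < δ) (hδθ : δ ≤ 1 - θ) (hδab : δ < a + b) :
    ∃ q : ℝ, a / (1 - θ) ≤ q ∧ -1 < q ∧ q ≤ 0 ∧ (1 + q) * (1 - θ) < a + b := by
  have hθ : 0 < 1 - θ := by linarith
  refine ⟨max (1 - θ + a) δ / (1 - θ) - 1, ?_, ?_, ?_, ?_⟩
  · rw [le_sub_iff_add_le, div_add_one hθ.ne', div_le_div_iff_of_pos_right hθ]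
    exact le_max_of_le_left (by linarith)
  · have := div_pos (lt_max_of_lt_right (b := 1 - θ + a) hδ) hθ
    linarith
  · rw [sub_nonpos, div_le_one hθ]
    exact max_le (by linarith) hδθ
  · rw [add_sub_cancel, div_mul_cancel₀ _ hθ.ne']
    exact max_lt (by linarith) hδab

lemma tsum_ofReal_mul_pow {c r : ℝ} (hc : 0 ≤ c) (hr0 : 0 ≤ r) (hr1 : r < 1) :
    ∑' m : ℕ, ENNReal.ofReal (c * r ^ m) = ENNReal.ofReal (c / (1 - r)) := by
  rw [← ENNReal.ofReal_tsum_of_nonneg (fun m => by positivity)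
    ((summable_geometric_of_lt_one hr0 hr1).mul_left c), tsum_mul_left,
    tsum_geometric_of_lt_one hr0 hr1, div_eq_mul_inv]

/-- the first key dyadic estimate.  For `1/3 < γ ≤ 1/2`, `η ≥ 0`, `ε > 0`
with `η + ε < γ` and `i ∈ {0,1,2}`, there is a finite constant `M̃` (depending only on
`γ, η, ε, i`) such that for every `s < t` and every nonnegative superadditive function
`W` on the subintervals of `[s,t]`, with dyadic points `τⁿₘ = s + (n/2^m)(t-s)`,
`∑_{m ≥ 1} ∑_{0 ≤ n < 2^m} (1 - 2n/2^{m+1})^{γ(i-2)-η} (1/2^{m+1})^{2γ+η+ε}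
  W(τ^{2n+1}_{m+1}, τ^{2n+2}_{m+1})^{γ-η-ε} ≤ M̃ W(s,t)^{γ-η-ε}`.
(The outer sum over `m ≥ 1` is written below as a sum over `m : ℕ` with index `m+1`.) -/
theorem dyadic_estimate_one (γ η ε : ℝ) (i : ℕ)
    (hγl : 1 / 3 < γ) (hγu : γ ≤ 1 / 2) (hη : 0 ≤ η) (hε : 0 < ε)
    (hηε : η + ε < γ) (hi : i ≤ 2) :
    ∃ M : ℝ, 0 ≤ M ∧ ∀ (s t : ℝ), s < t →
      ∀ W : ℝ → ℝ → ℝ,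
        (∀ u v, s ≤ u → u ≤ v → v ≤ t → 0 ≤ W u v) →
        (∀ u v r, s ≤ u → u ≤ v → v ≤ r → r ≤ t → W u v + W v r ≤ W u r) →
        (∑' m : ℕ, ∑ k ∈ Finset.range (2 ^ (m + 1)),
            ENNReal.ofReal
              ((1 - 2 * (k : ℝ) / 2 ^ (m + 2)) ^ (γ * ((i : ℝ) - 2) - η) *
                ((1 : ℝ) / 2 ^ (m + 2)) ^ (2 * γ + η + ε) *
                W (s + (2 * (k : ℝ) + 1) / 2 ^ (m + 2) * (t - s))
                    (s + (2 * (k : ℝ) + 2) / 2 ^ (m + 2) * (t - s)) ^ (γ - η - ε)))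
          ≤ ENNReal.ofReal (M * W s t ^ (γ - η - ε)) := by
  have hi' : (i : ℝ) ≤ 2 := by exact_mod_cast hi
  obtain ⟨q, haq, hq1, hq0, hexp⟩ := exists_integrable_exponent (θ := γ - η - ε)
    (a := γ * ((i : ℝ) - 2) - η) (b := 2 * γ + η + ε) (δ := ε / 2) (by linarith) (by nlinarith) (by linarith) (by linarith)
    (by linarith) (by nlinarith [i.cast_nonneg (α := ℝ)])
  set C := (2 : ℝ) ^ (-(2 * γ + η + ε)) / (1 + q) ^ (1 - (γ - η - ε))
  set r := (2 : ℝ) ^ ((1 + q) * (1 - (γ - η - ε)) - (γ * ((i : ℝ) - 2) - η) - (2 * γ + η + ε))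
  have hq : 0 < 1 + q := by linarith
  have hr1 : r < 1 := Real.rpow_lt_one_of_one_lt_of_neg one_lt_two (by linarith)
  refine ⟨C * r / (1 - r), div_nonneg (by positivity) (by linarith), fun s t hst W hW0 hWs => ?_⟩
  have hW : SuperadditiveOn W s t := ⟨hW0, hWs⟩
  have hWst : 0 ≤ W s t := hW0 s t le_rfl hst.le le_rfl
  calc _ ≤ ∑' m : ℕ, ENNReal.ofReal (C * r * W s t ^ (γ - η - ε) * r ^ m) :=
        ENNReal.tsum_le_tsum fun m => by
          convert hW.sum_dyadic_le hst.le (by linarith) (by linarith) haq hq1 hq0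
            (N := 2 ^ (m + 1)) (d := 2 ^ (m + 2)) (by positivity) (by push_cast; ring) using 2
          push_cast
          rw [← Real.rpow_pow_comm zero_le_two]
          ring
    _ = _ := by
        rw [tsum_ofReal_mul_pow (by positivity) (by positivity) hr1]
        ring_nf
end

section
/- Let $\tfrac13<\gamma\le\tfrac12$, $\eta\ge 0$, $\epsilon>0$ with $\eta+\epsilon<\gamma$, and $i\in\{0,1,2\}$. There exists a constant $\tilde M<\infty$, depending only on $\gamma,\eta,\epsilon,i$, with the following property: for every $s<t$ and every nonnegative superadditive function $W$ on the subintervals of $[s,t]$, with dyadic points $\tau^n_m := s+\tfrac{n}{2^m}(t-s)$, one has $\sum_{m\ge0}\sum_{0\le n<2^m}\Big(1-\tfrac{2n}{2^{m+1}}\Big)^{\gamma(i-2)-\eta}\Big(\tfrac{1}{2^{m+1}}\Big)^{2\gamma+\eta+2\epsilon}\,W(\tau^{2n+1}_{m+1},\tau^{2n+2}_{m+1})^{2(\gamma-\eta-\epsilon)} \le \tilde M\, W(s,t)^{2(\gamma-\eta-\epsilon)}$. -/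
open Finset

/-!
Write `θ = 2(γ - η - ε)`. On level `m`, Hölder's inequality with exponents `1/(1-θ)` and `1/θ`
separates the weights from the increments. The increments `W(τ^{2k+1}_{m+1}, τ^{2k+2}_{m+1})`
sum to at most `W(s,t)` by superadditivity. The weights `(1 - k/2^m)^e`, `e = γ(i-2) - η ≤ 0`,
are after reflection `(2^m/(j+1))^{-e}`, and splitting `j` into dyadic blocks bounds their
`ℓ^{1/(1-θ)}` norm by `(m+1) 2^{m max(-e, 1-θ)}`. Since `max(-e, 1-θ) < 2γ + η + 2ε`, the
factor `2^{-(m+1)(2γ+η+2ε)}` makes the level bounds `(m+1) ρ^m W(s,t)^θ` with `ρ < 1` summable.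
-/

noncomputable def dyadicPoint (s t : ℝ) (m j : ℕ) : ℝ := s + j / 2 ^ m * (t - s)

section dyadicPoint

variable {s t : ℝ} (m : ℕ)

@[simp] lemma dyadicPoint_zero : dyadicPoint s t m 0 = s := by simp [dyadicPoint]

@[simp] lemma dyadicPoint_two_pow : dyadicPoint s t m (2 ^ m) = t := by simp [dyadicPoint]

lemma dyadicPoint_mono (hst : s ≤ t) : Monotone (dyadicPoint s t m) := by
  intro a b hab
  unfold dyadicPoint
  gcongr

lemma dyadicPoint_succ_two_mul_add_one (k : ℕ) :
    dyadicPoint s t (m + 1) (2 * k + 1) = s + (2 * (k : ℝ) + 1) / 2 ^ (m + 1) * (t - s) := by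
  simp [dyadicPoint]

lemma dyadicPoint_succ_two_mul_add_two (k : ℕ) :
    dyadicPoint s t (m + 1) (2 * k + 2) = s + (2 * (k : ℝ) + 2) / 2 ^ (m + 1) * (t - s) := by
  simp [dyadicPoint]

end dyadicPoint

section Superadditive

variable {s t : ℝ} {W : ℝ → ℝ → ℝ} (m : ℕ)

lemma sum_odd_increments_le
    (hW0 : ∀ u v, s ≤ u → u ≤ v → v ≤ t → 0 ≤ W u v)
    (hW : ∀ u v r, s ≤ u → u ≤ v → v ≤ r → r ≤ t → W u v + W v r ≤ W u r)
    {σ : ℕ → ℝ} (hσ : Monotone σ) (hs : s ≤ σ 0) :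
    ∀ n, σ (2 * n) ≤ t →
      ∑ k ∈ range n, W (σ (2 * k + 1)) (σ (2 * k + 2)) ≤ W (σ 0) (σ (2 * n)) := by
  intro n
  induction n with
  | zero => simpa using hW0 _ _ hs le_rfl
  | succ n ih =>
    intro ht
    rw [show 2 * (n + 1) = 2 * n + 2 by ring] at ht ⊢
    have h₁ : σ (2 * n) ≤ σ (2 * n + 1) := hσ (by omega)
    have h₂ : σ (2 * n + 1) ≤ σ (2 * n + 2) := hσ (by omega)
    have h₀ : σ 0 ≤ σ (2 * n) := hσ (by omega)
    have hgap := hW0 _ _ (hs.trans h₀) h₁ (h₂.trans ht)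
    have hjoin₁ := hW _ _ _ hs h₀ h₁ (h₂.trans ht)
    have hjoin₂ := hW _ _ _ hs (h₀.trans h₁) h₂ ht
    rw [sum_range_succ]
    linarith [ih ((h₁.trans h₂).trans ht)]

lemma dyadic_increment_nonneg (hst : s ≤ t)
    (hW0 : ∀ u v, s ≤ u → u ≤ v → v ≤ t → 0 ≤ W u v) {k : ℕ} (hk : k < 2 ^ m) :
    0 ≤ W (s + (2 * (k : ℝ) + 1) / 2 ^ (m + 1) * (t - s))
      (s + (2 * (k : ℝ) + 2) / 2 ^ (m + 1) * (t - s)) := by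
  have hσ := dyadicPoint_mono (m + 1) hst
  rw [← dyadicPoint_succ_two_mul_add_one, ← dyadicPoint_succ_two_mul_add_two]
  refine hW0 _ _ ?_ (hσ (by omega)) ?_
  · simpa using hσ (Nat.zero_le (2 * k + 1))
  · simpa using hσ (show 2 * k + 2 ≤ 2 ^ (m + 1) by rw [pow_succ]; omega)

lemma sum_dyadic_increments_le (hst : s ≤ t)
    (hW0 : ∀ u v, s ≤ u → u ≤ v → v ≤ t → 0 ≤ W u v)
    (hW : ∀ u v r, s ≤ u → u ≤ v → v ≤ r → r ≤ t → W u v + W v r ≤ W u r) :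
    ∑ k ∈ range (2 ^ m), W (s + (2 * (k : ℝ) + 1) / 2 ^ (m + 1) * (t - s))
      (s + (2 * (k : ℝ) + 2) / 2 ^ (m + 1) * (t - s)) ≤ W s t := by
  have hend : dyadicPoint s t (m + 1) (2 * 2 ^ m) = t := by
    rw [← pow_succ', dyadicPoint_two_pow]
  simp_rw [← dyadicPoint_succ_two_mul_add_one, ← dyadicPoint_succ_two_mul_add_two]
  simpa [hend] using sum_odd_increments_le hW0 hW (dyadicPoint_mono (m + 1) hst) (by simp)
    (2 ^ m) hend.le

end Superadditive

lemma sum_range_two_pow_div_rpow_le {b : ℝ} (hb : 0 ≤ b) (m : ℕ) :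
    ∑ j ∈ range (2 ^ m), ((2 : ℝ) ^ m / (j + 1)) ^ b ≤ (m + 1) * ((2 : ℝ) ^ max b 1) ^ m := by
  induction m with
  | zero => simp
  | succ m ih =>
    set A := (2 : ℝ) ^ max b 1
    have h2b : (2 : ℝ) ^ b ≤ A := Real.rpow_le_rpow_of_exponent_le one_le_two (le_max_left _ _)
    have h2 : (2 : ℝ) ≤ A := by
      simpa using Real.rpow_le_rpow_of_exponent_le one_le_two (le_max_right b 1)
    have lower : ∑ j ∈ range (2 ^ m), ((2 : ℝ) ^ (m + 1) / (j + 1)) ^ b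
        = 2 ^ b * ∑ j ∈ range (2 ^ m), ((2 : ℝ) ^ m / (j + 1)) ^ b := by
      rw [mul_sum]
      refine sum_congr rfl fun j _ => ?_
      rw [pow_succ', mul_div_assoc, Real.mul_rpow zero_le_two (by positivity)]
    have upper : ∑ j ∈ range (2 ^ m), ((2 : ℝ) ^ (m + 1) / ((2 ^ m + j : ℕ) + 1)) ^ b
        ≤ 2 ^ m * 2 ^ b := by
      have hterm : ∀ j ∈ range (2 ^ m),
          ((2 : ℝ) ^ (m + 1) / ((2 ^ m + j : ℕ) + 1)) ^ b ≤ 2 ^ b := by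
        intro j _
        refine Real.rpow_le_rpow (by positivity) ?_ hb
        rw [div_le_iff₀ (by positivity), pow_succ]
        push_cast
        nlinarith [(j.cast_nonneg : (0 : ℝ) ≤ j)]
      simpa using sum_le_card_nsmul _ _ _ hterm
    rw [pow_succ, mul_two, sum_range_add, lower]
    calc 2 ^ b * ∑ j ∈ range (2 ^ m), ((2 : ℝ) ^ m / (j + 1)) ^ b
          + ∑ j ∈ range (2 ^ m), ((2 : ℝ) ^ (m + 1) / ((2 ^ m + j : ℕ) + 1)) ^ b
        ≤ A * ((m + 1) * A ^ m) + A ^ m * A := add_le_add (by gcongr) (upper.trans (by gcongr))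
    _ = _ := by push_cast; ring

lemma one_sub_two_mul_div_two_pow_succ {m k : ℕ} :
    1 - 2 * (k : ℝ) / 2 ^ (m + 1) = (2 ^ m - k) / 2 ^ m := by
  rw [pow_succ]
  field_simp

lemma one_sub_two_mul_div_two_pow_succ_pos {m k : ℕ} (hk : k < 2 ^ m) :
    0 < 1 - 2 * (k : ℝ) / 2 ^ (m + 1) := by
  rw [one_sub_two_mul_div_two_pow_succ]
  have : (k : ℝ) < 2 ^ m := by exact_mod_cast hk
  exact div_pos (sub_pos.2 this) (by positivity)

lemma sum_rpow_one_sub_dyadic_le {θ e : ℝ} (hθ₀ : 0 ≤ θ) (hθ₁ : θ < 1) (he : e ≤ 0) (m : ℕ) :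
    (∑ k ∈ range (2 ^ m), ((1 - 2 * (k : ℝ) / 2 ^ (m + 1)) ^ e) ^ (1 - θ)⁻¹) ^ (1 - θ)
      ≤ (m + 1) * ((2 : ℝ) ^ max (-e) (1 - θ)) ^ m := by
  have hθ : 0 < 1 - θ := sub_pos.2 hθ₁
  set b := -(e * (1 - θ)⁻¹)
  have hb : 0 ≤ b := neg_nonneg.2 (mul_nonpos_of_nonpos_of_nonneg he (inv_nonneg.2 hθ.le))
  have hterm : ∀ k ∈ range (2 ^ m), ((1 - 2 * (k : ℝ) / 2 ^ (m + 1)) ^ e) ^ (1 - θ)⁻¹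
      = ((2 : ℝ) ^ m / (((2 ^ m - 1 - k : ℕ) : ℝ) + 1)) ^ b := by
    intro k hk
    have hk : k < 2 ^ m := mem_range.1 hk
    have hcast : ((2 ^ m - 1 - k : ℕ) : ℝ) + 1 = 2 ^ m - k := by
      rw [Nat.sub_sub, Nat.cast_sub (by omega)]
      push_cast
      ring
    have hpos : (0 : ℝ) < 2 ^ m - k := by
      rw [← hcast]
      positivity
    rw [one_sub_two_mul_div_two_pow_succ, hcast, ← Real.rpow_mul (by positivity), ← inv_div,
      Real.inv_rpow (by positivity), ← Real.rpow_neg (by positivity)]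
  have hsum := sum_range_two_pow_div_rpow_le hb m
  rw [← sum_range_reflect] at hsum
  have hexp : max b 1 * (1 - θ) = max (-e) (1 - θ) := by
    rw [max_mul_of_nonneg _ _ hθ.le, one_mul, neg_mul, inv_mul_cancel_right₀ hθ.ne']
  rw [sum_congr rfl hterm]
  calc _ ≤ ((m + 1) * ((2 : ℝ) ^ max b 1) ^ m) ^ (1 - θ) :=
        Real.rpow_le_rpow (sum_nonneg fun j _ => by positivity) hsum hθ.le
    _ = ((m : ℝ) + 1) ^ (1 - θ) * ((2 : ℝ) ^ max (-e) (1 - θ)) ^ m := by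
        rw [Real.mul_rpow (by positivity) (by positivity), ← Real.rpow_pow_comm (by positivity),
          ← Real.rpow_mul zero_le_two, hexp]
    _ ≤ (m + 1) * ((2 : ℝ) ^ max (-e) (1 - θ)) ^ m := by
        gcongr
        exact Real.rpow_le_self_of_one_le (by simp) (by linarith)

lemma sum_mul_rpow_le_of_lt_one {ι : Type*} (s : Finset ι) {θ : ℝ} (hθ₀ : 0 < θ) (hθ₁ : θ < 1)
    {a w : ι → ℝ} (ha : ∀ i ∈ s, 0 ≤ a i) (hw : ∀ i ∈ s, 0 ≤ w i) :
    ∑ i ∈ s, a i * w i ^ θ ≤ (∑ i ∈ s, a i ^ (1 - θ)⁻¹) ^ (1 - θ) * (∑ i ∈ s, w i) ^ θ := by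
  have := Real.inner_le_Lp_mul_Lq_of_nonneg s (Real.HolderConjugate.one_sub_inv_inv hθ₀ hθ₁) ha
    fun i hi => Real.rpow_nonneg (hw i hi) θ
  simp only [one_div, inv_inv] at this
  convert this using 3
  exact sum_congr rfl fun i hi => (Real.rpow_rpow_inv (hw i hi) hθ₀.ne').symm

lemma one_div_two_pow_succ_rpow_le {q : ℝ} (hq : 0 ≤ q) (m : ℕ) :
    ((1 : ℝ) / 2 ^ (m + 1)) ^ q ≤ ((2 : ℝ) ^ (-q)) ^ m := by
  rw [Real.rpow_neg zero_le_two, inv_pow, Real.rpow_pow_comm zero_le_two, one_div,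
    Real.inv_rpow (by positivity)]
  gcongr
  · exact one_le_two
  · omega

lemma sum_dyadic_level_le {θ e q : ℝ} (hθ₀ : 0 < θ) (hθ₁ : θ < 1) (he : e ≤ 0) (hq : 0 ≤ q)
    (m : ℕ) {w : ℕ → ℝ} {V : ℝ} (hw : ∀ k ∈ range (2 ^ m), 0 ≤ w k)
    (hV : ∑ k ∈ range (2 ^ m), w k ≤ V) :
    ∑ k ∈ range (2 ^ m), (1 - 2 * (k : ℝ) / 2 ^ (m + 1)) ^ e * ((1 : ℝ) / 2 ^ (m + 1)) ^ q *
        w k ^ θ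
      ≤ (m + 1) * ((2 : ℝ) ^ (max (-e) (1 - θ) - q)) ^ m * V ^ θ := by
  have ha : ∀ k ∈ range (2 ^ m), 0 ≤ (1 - 2 * (k : ℝ) / 2 ^ (m + 1)) ^ e := fun k hk =>
    Real.rpow_nonneg (one_sub_two_mul_div_two_pow_succ_pos (mem_range.1 hk)).le e
  have holder : ∑ k ∈ range (2 ^ m), (1 - 2 * (k : ℝ) / 2 ^ (m + 1)) ^ e * w k ^ θ
      ≤ (m + 1) * ((2 : ℝ) ^ max (-e) (1 - θ)) ^ m * V ^ θ := by
    have hw_sum : 0 ≤ ∑ k ∈ range (2 ^ m), w k := sum_nonneg hw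
    refine (sum_mul_rpow_le_of_lt_one _ hθ₀ hθ₁ ha hw).trans ?_
    gcongr
    exact sum_rpow_one_sub_dyadic_le hθ₀.le hθ₁ he m
  calc _ = ((1 : ℝ) / 2 ^ (m + 1)) ^ q *
        ∑ k ∈ range (2 ^ m), (1 - 2 * (k : ℝ) / 2 ^ (m + 1)) ^ e * w k ^ θ := by
        rw [mul_sum]
        exact sum_congr rfl fun k _ => by ring
    _ ≤ ((2 : ℝ) ^ (-q)) ^ m * ((m + 1) * ((2 : ℝ) ^ max (-e) (1 - θ)) ^ m * V ^ θ) :=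
        mul_le_mul (one_div_two_pow_succ_rpow_le hq m) holder
          (sum_nonneg fun k hk => mul_nonneg (ha k hk) (Real.rpow_nonneg (hw k hk) θ))
          (by positivity)
    _ = _ := by
        rw [Real.rpow_sub two_pos, Real.rpow_neg zero_le_two]
        ring

lemma ENNReal.tsum_sum_ofReal_le {ι : Type*} {f : ℕ → ι → ℝ} {S : ℕ → Finset ι} {c : ℕ → ℝ}
    (hf : ∀ m, ∀ k ∈ S m, 0 ≤ f m k) (hc : Summable c) (hfc : ∀ m, ∑ k ∈ S m, f m k ≤ c m) :
    ∑' m, ∑ k ∈ S m, ENNReal.ofReal (f m k) ≤ ENNReal.ofReal (∑' m, c m) := by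
  rw [ENNReal.ofReal_tsum_of_nonneg (fun m => (sum_nonneg (hf m)).trans (hfc m)) hc]
  refine ENNReal.tsum_le_tsum fun m => ?_
  rw [← ENNReal.ofReal_sum_of_nonneg (hf m)]
  exact ENNReal.ofReal_le_ofReal (hfc m)

/-- the second key dyadic estimate.  For `1/3 < γ ≤ 1/2`, `η ≥ 0`, `ε > 0`
with `η + ε < γ` and `i ∈ {0,1,2}`, there is a finite constant `M̃` (depending only on
`γ, η, ε, i`) such that for every `s < t` and every nonnegative superadditive function
`W` on the subintervals of `[s,t]`, with dyadic points `τⁿₘ = s + (n/2^m)(t-s)`,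
`∑_{m ≥ 0} ∑_{0 ≤ n < 2^m} (1 - 2n/2^{m+1})^{γ(i-2)-η} (1/2^{m+1})^{2γ+η+2ε}
  W(τ^{2n+1}_{m+1}, τ^{2n+2}_{m+1})^{2(γ-η-ε)} ≤ M̃ W(s,t)^{2(γ-η-ε)}`. -/
theorem dyadic_estimate_two (γ η ε : ℝ) (i : ℕ)
    (hγl : 1 / 3 < γ) (hγu : γ ≤ 1 / 2) (hη : 0 ≤ η) (hε : 0 < ε)
    (hηε : η + ε < γ) (hi : i ≤ 2) :
    ∃ M : ℝ, 0 ≤ M ∧ ∀ (s t : ℝ), s < t →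
      ∀ W : ℝ → ℝ → ℝ,
        (∀ u v, s ≤ u → u ≤ v → v ≤ t → 0 ≤ W u v) →
        (∀ u v r, s ≤ u → u ≤ v → v ≤ r → r ≤ t → W u v + W v r ≤ W u r) →
        (∑' m : ℕ, ∑ k ∈ Finset.range (2 ^ m),
            ENNReal.ofReal
              ((1 - 2 * (k : ℝ) / 2 ^ (m + 1)) ^ (γ * ((i : ℝ) - 2) - η) *
                ((1 : ℝ) / 2 ^ (m + 1)) ^ (2 * γ + η + 2 * ε) *
                W (s + (2 * (k : ℝ) + 1) / 2 ^ (m + 1) * (t - s))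
                    (s + (2 * (k : ℝ) + 2) / 2 ^ (m + 1) * (t - s)) ^
                  (2 * (γ - η - ε))))
          ≤ ENNReal.ofReal (M * W s t ^ (2 * (γ - η - ε))) := by
  have hγi : 0 ≤ γ * i := mul_nonneg (by linarith) i.cast_nonneg
  have hi' : (i : ℝ) ≤ 2 := by exact_mod_cast hi
  set θ := 2 * (γ - η - ε)
  set e := γ * ((i : ℝ) - 2) - η
  set q := 2 * γ + η + 2 * ε
  have hθ₀ : 0 < θ := by linarith
  have hθ₁ : θ < 1 := by linarith
  have he : e ≤ 0 := by nlinarith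
  set ρ := (2 : ℝ) ^ (max (-e) (1 - θ) - q)
  have hρ₀ : 0 ≤ ρ := by positivity
  have hρ₁ : ρ < 1 :=
    Real.rpow_lt_one_of_one_lt_of_neg one_lt_two (sub_neg.2 (max_lt (by linarith) (by linarith)))
  have hsummable : Summable fun m : ℕ => ((m : ℝ) + 1) * ρ ^ m := by
    simpa [add_mul] using (summable_pow_mul_geometric_of_norm_lt_one 1
      (by rwa [Real.norm_of_nonneg hρ₀])).add (summable_geometric_of_lt_one hρ₀ hρ₁)
  refine ⟨∑' m : ℕ, ((m : ℝ) + 1) * ρ ^ m, tsum_nonneg fun m => by positivity,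
    fun s t hst W hW0 hW => ?_⟩
  rw [← tsum_mul_right]
  refine ENNReal.tsum_sum_ofReal_le (fun m k hk => ?_) (hsummable.mul_right _) fun m =>
    sum_dyadic_level_le hθ₀ hθ₁ he (by linarith) m
      (fun k hk => dyadic_increment_nonneg m hst.le hW0 (mem_range.1 hk))
      (sum_dyadic_increments_le m hst.le hW0 hW)
  have hk := mem_range.1 hk
  exact mul_nonneg (mul_nonneg (Real.rpow_nonneg (one_sub_two_mul_div_two_pow_succ_pos hk).le _)
    (by positivity)) (Real.rpow_nonneg (dyadic_increment_nonneg m hst.le hW0 hk) _)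
end

section
/- Let $w_1,w_2$ be nonnegative superadditive functions on the subintervals of $[s,t]$ and let $a,b>0$ with $a+b=1$. Then for every finite partition $s=\kappa_0<\kappa_1<\dots<\kappa_m=t$ with $m\ge 2$ there exists an index $j$ with $1\le j\le m-1$ such that $w_1(\kappa_{j-1},\kappa_j)^{a}\,w_2(\kappa_j,\kappa_{j+1})^{b} \le \frac{2}{m-1}\,w_1(s,t)^{a}\,w_2(s,t)^{b}$. -/
/-- pigeonhole lemma for superadditive functions.  Let `w₁, w₂` be
nonnegative superadditive functions on the subintervals of `[s,t]` and `a, b > 0` with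
`a + b = 1`.  Then for every finite partition `s = κ₀ < κ₁ < … < κ_m = t` with `m ≥ 2`
there is an index `j` with `1 ≤ j ≤ m - 1` such that
`w₁(κ_{j-1},κ_j)^a w₂(κ_j,κ_{j+1})^b ≤ (2/(m-1)) w₁(s,t)^a w₂(s,t)^b`. -/
theorem pigeonhole_partition (s t : ℝ) (w₁ w₂ : ℝ → ℝ → ℝ) (a b : ℝ)
    (ha : 0 < a) (hb : 0 < b) (hab : a + b = 1)
    (hw₁0 : ∀ u v, s ≤ u → u ≤ v → v ≤ t → 0 ≤ w₁ u v)
    (hw₂0 : ∀ u v, s ≤ u → u ≤ v → v ≤ t → 0 ≤ w₂ u v)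
    (hw₁ : ∀ u v r, s ≤ u → u ≤ v → v ≤ r → r ≤ t → w₁ u v + w₁ v r ≤ w₁ u r)
    (hw₂ : ∀ u v r, s ≤ u → u ≤ v → v ≤ r → r ≤ t → w₂ u v + w₂ v r ≤ w₂ u r)
    (m : ℕ) (hm : 2 ≤ m) (κ : ℕ → ℝ)
    (hκ : ∀ i < m, κ i < κ (i + 1)) (hκ0 : κ 0 = s) (hκm : κ m = t) :
    ∃ j : ℕ, 1 ≤ j ∧ j ≤ m - 1 ∧
      w₁ (κ (j - 1)) (κ j) ^ a * w₂ (κ j) (κ (j + 1)) ^ b ≤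
        2 / ((m : ℝ) - 1) * (w₁ s t ^ a * w₂ s t ^ b) := by
  -- monotonicity of κ
  have hle : ∀ i j : ℕ, i ≤ j → j ≤ m → κ i ≤ κ j := by
    intro i j hij hjm
    induction j with
    | zero => simp_all
    | succ n ih =>
      rcases Nat.lt_or_ge i (n+1) with h | h
      · exact le_trans (ih (by omega) (by omega)) (le_of_lt (hκ n (by omega)))
      · have : i = n + 1 := by omega
        simp [this]
  have hs : ∀ i, i ≤ m → s ≤ κ i := fun i hi => hκ0 ▸ hle 0 i (Nat.zero_le _) hi
  have ht : ∀ i, i ≤ m → κ i ≤ t := fun i hi => hκm ▸ hle i m hi le_rfl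
  set c : ℝ := 2 / ((m : ℝ) - 1) with hc_def
  have hm1 : (0:ℝ) < (m : ℝ) - 1 := by
    have : (2:ℝ) ≤ (m : ℝ) := by exact_mod_cast hm
    linarith
  have hc : 0 < c := by positivity
  set W₁ := w₁ s t with hW₁def
  set W₂ := w₂ s t with hW₂def
  have hW₁0 : 0 ≤ W₁ := hw₁0 s t le_rfl (by
    have := hs m le_rfl; have := ht 0 (by omega); rw [hκ0] at *; linarith [hs m le_rfl]) le_rfl
  have hW₂0 : 0 ≤ W₂ := hw₂0 s t le_rfl (by linarith [hs m le_rfl, ht m le_rfl]) le_rfl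
  -- superadditive sum bound
  have hsum₁ : ∀ n, n ≤ m → ∑ i ∈ Finset.range n, w₁ (κ i) (κ (i+1)) ≤ w₁ (κ 0) (κ n) := by
    intro n hn
    induction n with
    | zero => simpa using hw₁0 (κ 0) (κ 0) (hs 0 (by omega)) le_rfl (ht 0 (by omega))
    | succ k ih =>
      rw [Finset.sum_range_succ]
      have h1 := ih (by omega)
      have h2 := hw₁ (κ 0) (κ k) (κ (k+1)) (hs 0 (by omega)) (hle 0 k (by omega) (by omega))
        (le_of_lt (hκ k (by omega))) (ht (k+1) hn)
      linarith
  have hsum₂ : ∀ n, n ≤ m → ∑ i ∈ Finset.range n, w₂ (κ i) (κ (i+1)) ≤ w₂ (κ 0) (κ n) := by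
    intro n hn
    induction n with
    | zero => simpa using hw₂0 (κ 0) (κ 0) (hs 0 (by omega)) le_rfl (ht 0 (by omega))
    | succ k ih =>
      rw [Finset.sum_range_succ]
      have h1 := ih (by omega)
      have h2 := hw₂ (κ 0) (κ k) (κ (k+1)) (hs 0 (by omega)) (hle 0 k (by omega) (by omega))
        (le_of_lt (hκ k (by omega))) (ht (k+1) hn)
      linarith
  have hterm₁0 : ∀ i ∈ Finset.range m, 0 ≤ w₁ (κ i) (κ (i+1)) := by
    intro i hi
    simp only [Finset.mem_range] at hi
    exact hw₁0 _ _ (hs i (by omega)) (le_of_lt (hκ i hi)) (ht (i+1) (by omega))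
  have hterm₂0 : ∀ i ∈ Finset.range m, 0 ≤ w₂ (κ i) (κ (i+1)) := by
    intro i hi
    simp only [Finset.mem_range] at hi
    exact hw₂0 _ _ (hs i (by omega)) (le_of_lt (hκ i hi)) (ht (i+1) (by omega))
  -- sums over range (m-1)
  have hS₁ : ∑ i ∈ Finset.range (m-1), w₁ (κ i) (κ (i+1)) ≤ W₁ := by
    have h1 : ∑ i ∈ Finset.range (m-1), w₁ (κ i) (κ (i+1)) ≤
        ∑ i ∈ Finset.range m, w₁ (κ i) (κ (i+1)) := by
      apply Finset.sum_le_sum_of_subset_of_nonneg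
      · exact Finset.range_subset_range.mpr (by omega)
      · intro i hi _; exact hterm₁0 i hi
    have h2 := hsum₁ m le_rfl
    rw [hκ0, hκm] at h2
    linarith
  have hS₂ : ∑ i ∈ Finset.range (m-1), w₂ (κ (i+1)) (κ (i+2)) ≤ W₂ := by
    have hmm : m - 1 + 1 = m := by omega
    have h1 : ∑ i ∈ Finset.range (m-1+1), w₂ (κ i) (κ (i+1)) =
        (∑ i ∈ Finset.range (m-1), w₂ (κ (i+1)) (κ (i+1+1))) + w₂ (κ 0) (κ 1) :=
      Finset.sum_range_succ' _ _
    have h2 := hsum₂ m le_rfl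
    rw [hκ0, hκm] at h2
    rw [hmm] at h1
    have h3 : 0 ≤ w₂ (κ 0) (κ 1) := hterm₂0 0 (by simp; omega)
    have h4 : ∀ i, (i+1+1) = i + 2 := fun i => rfl
    simp only [h4] at h1
    linarith [h1 ▸ h2]
  -- the bad sets
  set A : Finset ℕ := (Finset.range (m-1)).filter (fun i => c * W₁ < w₁ (κ i) (κ (i+1))) with hA_def
  set B : Finset ℕ := (Finset.range (m-1)).filter (fun i => c * W₂ < w₂ (κ (i+1)) (κ (i+2))) with hB_def
  have hcardA : 2 * A.card ≤ m - 2 := by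
    rcases A.eq_empty_or_nonempty with h | h
    · simp only [h, Finset.card_empty]; omega
    · have h1 : (A.card : ℝ) * (c * W₁) < ∑ i ∈ A, w₁ (κ i) (κ (i+1)) := by
        have := Finset.sum_lt_sum_of_nonempty h
          (f := fun _ => c * W₁) (g := fun i => w₁ (κ i) (κ (i+1)))
          (fun i hi => (Finset.mem_filter.mp hi).2)
        simpa [Finset.sum_const, nsmul_eq_mul] using this
      have h2 : ∑ i ∈ A, w₁ (κ i) (κ (i+1)) ≤ ∑ i ∈ Finset.range (m-1), w₁ (κ i) (κ (i+1)) := by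
        apply Finset.sum_le_sum_of_subset_of_nonneg (Finset.filter_subset _ _)
        intro i hi _
        exact hterm₁0 i (Finset.mem_of_subset (Finset.range_subset_range.mpr (by omega)) hi)
      have h3 : (A.card : ℝ) * (c * W₁) < W₁ := by linarith
      have h4 : (A.card : ℝ) * c < 1 := by nlinarith
      have h5 : c * ((m:ℝ) - 1) = 2 := div_mul_cancel₀ _ (ne_of_gt hm1)
      have h6 : (2 * A.card : ℝ) < (m:ℝ) - 1 := by nlinarith
      have h7 : (2 * A.card : ℕ) < m - 1 := by
        have : ((2 * A.card : ℕ) : ℝ) < ((m - 1 : ℕ) : ℝ) := by push_cast [Nat.cast_sub (by omega : 1 ≤ m)]; push_cast at h6 ⊢; linarith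
        exact_mod_cast this
      omega
  have hcardB : 2 * B.card ≤ m - 2 := by
    rcases B.eq_empty_or_nonempty with h | h
    · simp only [h, Finset.card_empty]; omega
    · have h1 : (B.card : ℝ) * (c * W₂) < ∑ i ∈ B, w₂ (κ (i+1)) (κ (i+2)) := by
        have := Finset.sum_lt_sum_of_nonempty h
          (f := fun _ => c * W₂) (g := fun i => w₂ (κ (i+1)) (κ (i+2)))
          (fun i hi => (Finset.mem_filter.mp hi).2)
        simpa [Finset.sum_const, nsmul_eq_mul] using this
      have h2 : ∑ i ∈ B, w₂ (κ (i+1)) (κ (i+2)) ≤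
          ∑ i ∈ Finset.range (m-1), w₂ (κ (i+1)) (κ (i+2)) := by
        apply Finset.sum_le_sum_of_subset_of_nonneg (Finset.filter_subset _ _)
        intro i hi _
        have hi' : i < m - 1 := Finset.mem_range.mp
          (Finset.mem_of_subset (Finset.range_subset_range.mpr le_rfl) hi)
        exact hw₂0 _ _ (hs (i+1) (by omega)) (le_of_lt (hκ (i+1) (by omega))) (ht (i+2) (by omega))
      have h3 : (B.card : ℝ) * (c * W₂) < W₂ := by linarith
      have h4 : (B.card : ℝ) * c < 1 := by nlinarith
      have h5 : c * ((m:ℝ) - 1) = 2 := div_mul_cancel₀ _ (ne_of_gt hm1)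
      have h6 : (2 * B.card : ℝ) < (m:ℝ) - 1 := by nlinarith
      have h7 : (2 * B.card : ℕ) < m - 1 := by
        have : ((2 * B.card : ℕ) : ℝ) < ((m - 1 : ℕ) : ℝ) := by push_cast [Nat.cast_sub (by omega : 1 ≤ m)]; push_cast at h6 ⊢; linarith
        exact_mod_cast this
      omega
  -- find a good index
  have hnotsub : ¬ (Finset.range (m-1) ⊆ A ∪ B) := by
    intro hsub
    have h1 := Finset.card_le_card hsub
    have h2 : (A ∪ B).card ≤ A.card + B.card := Finset.card_union_le A B
    rw [Finset.card_range] at h1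
    omega
  obtain ⟨i, hi, hni⟩ := Finset.not_subset.mp hnotsub
  have hi' : i < m - 1 := Finset.mem_range.mp hi
  have hniA : ¬ (c * W₁ < w₁ (κ i) (κ (i+1))) := by
    intro hcontra
    exact hni (Finset.mem_union_left _ (Finset.mem_filter.mpr ⟨hi, hcontra⟩))
  have hniB : ¬ (c * W₂ < w₂ (κ (i+1)) (κ (i+2))) := by
    intro hcontra
    exact hni (Finset.mem_union_right _ (Finset.mem_filter.mpr ⟨hi, hcontra⟩))
  push_neg at hniA hniB
  refine ⟨i + 1, by omega, by omega, ?_⟩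
  have hj1 : i + 1 - 1 = i := by omega
  rw [hj1]
  have hf0 : 0 ≤ w₁ (κ i) (κ (i+1)) := hterm₁0 i (Finset.mem_range.mpr (by omega))
  have hg0 : 0 ≤ w₂ (κ (i+1)) (κ (i+2)) :=
    hw₂0 _ _ (hs (i+1) (by omega)) (le_of_lt (hκ (i+1) (by omega))) (ht (i+2) (by omega))
  have h1 : w₁ (κ i) (κ (i+1)) ^ a ≤ (c * W₁) ^ a := Real.rpow_le_rpow hf0 hniA ha.le
  have h2 : w₂ (κ (i+1)) (κ (i+1+1)) ^ b ≤ (c * W₂) ^ b := by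
    have : i + 1 + 1 = i + 2 := rfl
    rw [this]
    exact Real.rpow_le_rpow hg0 hniB hb.le
  have h3 : w₁ (κ i) (κ (i+1)) ^ a * w₂ (κ (i+1)) (κ (i+1+1)) ^ b ≤ (c * W₁) ^ a * (c * W₂) ^ b := by
    apply mul_le_mul h1 h2 (Real.rpow_nonneg (by rw [show i+1+1 = i+2 from rfl]; exact hg0) _)
      (Real.rpow_nonneg (by positivity) _)
  have h4 : (c * W₁) ^ a * (c * W₂) ^ b = c * (W₁ ^ a * W₂ ^ b) := by
    rw [Real.mul_rpow hc.le hW₁0, Real.mul_rpow hc.le hW₂0]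
    have : c ^ a * c ^ b = c := by
      rw [← Real.rpow_add hc, hab, Real.rpow_one]
    calc c ^ a * W₁ ^ a * (c ^ b * W₂ ^ b) = (c ^ a * c ^ b) * (W₁ ^ a * W₂ ^ b) := by ring
      _ = c * (W₁ ^ a * W₂ ^ b) := by rw [this]
  linarith [h3, h4 ▸ h3]
end

section
/- Let $a<b$, let $\rho,\sigma>0$ and $C>0$, and let $w,w_1,w_2$ be nonnegative functions on the pairs $(u,v)$ with $a\le u\le v\le b$ such that: $w_1$ and $w_2$ are superadditive; $w$ is continuous with $w(u,u)=0$ for all $u$; and $w(u,v)^{\rho}\le C^{\rho}\big[w_1(u,v)^{\rho}+w_2(u,v)^{\sigma}\big]$ for all $a\le u\le v\le b$. Assume $w_1(a,b)>0$ and let $(\tau_n)_{n\ge0}$ be the greedy points of $w$ on $[a,b]$ with threshold $\chi:=2^{1/\rho}\,C\,w_1(a,b)$. Then for every $n\ge0$ such that $\tau_{n+1}<b$ one has $(n+1)\,w_1(a,b)^{\rho/\sigma}\le w_2(a,b)$; in particular, if $N:=\inf\{n>0:\tau_n=b\}$ is finite, then $(N-1)\,w_1(a,b)^{\rho/\sigma}\le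 w_2(a,b)$. -/
open Topology Filter Set


/-- The greedy points of `w` on `[a,b]` with threshold `χ`:
`τ₀ = a` and `τ_{n+1} = sup {τ ∈ [τ_n, b] : w(τ_n, τ) ≤ χ}`. -/
noncomputable def greedy (w : ℝ → ℝ → ℝ) (χ a b : ℝ) : ℕ → ℝ
  | 0 => a
  | n + 1 => sSup {τ | greedy w χ a b n ≤ τ ∧ τ ≤ b ∧ w (greedy w χ a b n) τ ≤ χ}

/-- deterministic greedy-point comparison.  Let `a < b`, `ρ, σ, C > 0`,
let `w₁, w₂` be nonnegative superadditive, `w` nonnegative, continuous with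
`w(u,u) = 0`, and `w(u,v)^ρ ≤ C^ρ (w₁(u,v)^ρ + w₂(u,v)^σ)`.  Suppose `w₁(a,b) > 0` and
let `(τ_n)` be the greedy points of `w` with threshold `χ = 2^{1/ρ} C w₁(a,b)`.  Then
for every `n` with `τ_{n+1} < b` one has `(n+1) w₁(a,b)^{ρ/σ} ≤ w₂(a,b)`; in
particular, if `N = inf{n > 0 : τ_n = b}` is finite then
`(N-1) w₁(a,b)^{ρ/σ} ≤ w₂(a,b)`. -/
theorem greedy_count_comparison (a b ρ σ C : ℝ) (hab : a < b)
    (hρ : 0 < ρ) (hσ : 0 < σ) (hC : 0 < C)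
    (w w₁ w₂ : ℝ → ℝ → ℝ)
    (hw0 : ∀ u v, a ≤ u → u ≤ v → v ≤ b → 0 ≤ w u v)
    (hw₁0 : ∀ u v, a ≤ u → u ≤ v → v ≤ b → 0 ≤ w₁ u v)
    (hw₂0 : ∀ u v, a ≤ u → u ≤ v → v ≤ b → 0 ≤ w₂ u v)
    (hw₁ : ∀ u v r, a ≤ u → u ≤ v → v ≤ r → r ≤ b → w₁ u v + w₁ v r ≤ w₁ u r)
    (hw₂ : ∀ u v r, a ≤ u → u ≤ v → v ≤ r → r ≤ b → w₂ u v + w₂ v r ≤ w₂ u r)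
    (hwc : ContinuousOn (fun p : ℝ × ℝ => w p.1 p.2)
      {p : ℝ × ℝ | a ≤ p.1 ∧ p.1 ≤ p.2 ∧ p.2 ≤ b})
    (hwd : ∀ u, a ≤ u → u ≤ b → w u u = 0)
    (hbound : ∀ u v, a ≤ u → u ≤ v → v ≤ b →
      w u v ^ ρ ≤ C ^ ρ * (w₁ u v ^ ρ + w₂ u v ^ σ))
    (hw₁pos : 0 < w₁ a b) :
    (∀ n : ℕ, greedy w (2 ^ (1 / ρ) * C * w₁ a b) a b (n + 1) < b →
      ((n : ℝ) + 1) * w₁ a b ^ (ρ / σ) ≤ w₂ a b) ∧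
    ((∃ k : ℕ, 0 < k ∧ greedy w (2 ^ (1 / ρ) * C * w₁ a b) a b k = b) →
      (((sInf {k : ℕ | 0 < k ∧ greedy w (2 ^ (1 / ρ) * C * w₁ a b) a b k = b} : ℕ) : ℝ) - 1) *
          w₁ a b ^ (ρ / σ) ≤ w₂ a b) := by
  set χ := 2 ^ (1 / ρ) * C * w₁ a b with hχdef
  have hχpos : 0 < χ :=
    mul_pos (mul_pos (Real.rpow_pos_of_pos two_pos _) hC) hw₁pos
  set τ := greedy w χ a b with hτdef
  have hτ0 : τ 0 = a := rfl
  have hτs : ∀ n, τ (n+1) = sSup {t | τ n ≤ t ∧ t ≤ b ∧ w (τ n) t ≤ χ} := fun n => rfl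
  -- basic membership/bounds facts: the set is nonempty, bounded above, closed
  have hmem : ∀ n, a ≤ τ n → τ n ≤ b →
      τ n ≤ τ (n+1) ∧ τ (n+1) ≤ b ∧ w (τ n) (τ (n+1)) ≤ χ := by
    intro n ha hb
    set S := {t | τ n ≤ t ∧ t ≤ b ∧ w (τ n) t ≤ χ} with hS
    have hne : S.Nonempty := ⟨τ n, le_refl _, hb, by rw [hwd (τ n) ha hb]; exact hχpos.le⟩
    have hbdd : BddAbove S := ⟨b, fun x hx => hx.2.1⟩
    have hcont : ContinuousOn (fun t => w (τ n) t) (Set.Icc (τ n) b) := by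
      have : ContinuousOn ((fun p : ℝ × ℝ => w p.1 p.2) ∘ (fun t => ((τ n : ℝ), t)))
          (Set.Icc (τ n) b) := by
        apply hwc.comp ((continuous_const.prodMk continuous_id).continuousOn)
        intro t ht
        exact ⟨ha, ht.1, ht.2⟩
      exact this
    have hSeq : S = Set.Icc (τ n) b ∩ (fun t => w (τ n) t) ⁻¹' Set.Iic χ := by
      ext t; constructor
      · rintro ⟨h1, h2, h3⟩; exact ⟨⟨h1, h2⟩, h3⟩
      · rintro ⟨⟨h1, h2⟩, h3⟩; exact ⟨h1, h2, h3⟩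
    have hclosed : IsClosed S := by
      rw [hSeq]
      exact hcont.preimage_isClosed_of_isClosed isClosed_Icc isClosed_Iic
    have hsup : sSup S ∈ S := hclosed.csSup_mem hne hbdd
    rw [hτs n]
    exact ⟨hsup.1, hsup.2.1, hsup.2.2⟩
  have hbnds : ∀ n, a ≤ τ n ∧ τ n ≤ b := by
    intro n
    induction n with
    | zero => exact ⟨le_refl _, hab.le⟩
    | succ m ih =>
        obtain ⟨h1, h2, _⟩ := hmem m ih.1 ih.2
        exact ⟨ih.1.trans h1, h2⟩
  have hmono : ∀ n, τ n ≤ τ (n+1) := fun n => (hmem n (hbnds n).1 (hbnds n).2).1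
  -- if τ_{n+1} < b, then w (τ n) (τ (n+1)) = χ
  have weq : ∀ n, τ (n+1) < b → w (τ n) (τ (n+1)) = χ := by
    intro n hlt
    obtain ⟨h1, h2, h3⟩ := hmem n (hbnds n).1 (hbnds n).2
    refine le_antisymm h3 ?_
    by_contra hcon
    push_neg at hcon
    -- w (τ n) (τ (n+1)) < χ; find a point further right still in the set
    have hcont : ContinuousWithinAt (fun t => w (τ n) t) (Set.Icc (τ n) b) (τ (n+1)) := by
      have hc : ContinuousOn ((fun p : ℝ × ℝ => w p.1 p.2) ∘ (fun t => ((τ n : ℝ), t)))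
          (Set.Icc (τ n) b) := by
        apply hwc.comp ((continuous_const.prodMk continuous_id).continuousOn)
        intro t ht
        exact ⟨(hbnds n).1, ht.1, ht.2⟩
      exact hc (τ (n+1)) ⟨h1, h2⟩
    have hev : (fun t => w (τ n) t) ⁻¹' Set.Iio χ ∈ 𝓝[Set.Icc (τ n) b] (τ (n+1)) :=
      hcont (Iio_mem_nhds hcon)
    have hsub : Set.Ioc (τ (n+1)) b ⊆ Set.Icc (τ n) b :=
      fun t ht => ⟨h1.trans ht.1.le, ht.2⟩
    have hev2 : (fun t => w (τ n) t) ⁻¹' Set.Iio χ ∈ 𝓝[Set.Ioc (τ (n+1)) b] (τ (n+1)) :=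
      nhdsWithin_mono _ hsub hev
    haveI hne : (𝓝[Set.Ioc (τ (n+1)) b] (τ (n+1))).NeBot := by
      rw [nhdsWithin_Ioc_eq_nhdsGT hlt]
      exact nhdsGT_neBot _
    obtain ⟨t, htIoc, htw⟩ :=
      Filter.nonempty_of_mem (Filter.inter_mem self_mem_nhdsWithin hev2)
    have htS : t ∈ {t | τ n ≤ t ∧ t ≤ b ∧ w (τ n) t ≤ χ} :=
      ⟨h1.trans htIoc.1.le, htIoc.2, le_of_lt htw⟩
    have : t ≤ τ (n+1) := by
      rw [hτs n]
      exact le_csSup ⟨b, fun x hx => hx.2.1⟩ htS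
    exact absurd htIoc.1 (not_lt.mpr this)
  -- key per-step estimate
  set M := w₁ a b ^ (ρ / σ) with hM
  have hMnn : 0 ≤ M := Real.rpow_nonneg hw₁pos.le _
  have hχρ : χ ^ ρ = 2 * (C ^ ρ * w₁ a b ^ ρ) := by
    rw [hχdef, Real.mul_rpow (by positivity) hw₁pos.le,
      Real.mul_rpow (by positivity) hC.le,
      ← Real.rpow_mul (by norm_num : (0:ℝ) ≤ 2), one_div_mul_cancel hρ.ne',
      Real.rpow_one]
    ring
  have step : ∀ n, τ (n+1) < b → M ≤ w₂ (τ n) (τ (n+1)) := by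
    intro n hlt
    obtain ⟨han, hnb⟩ := hbnds n
    obtain ⟨h1, h2, _⟩ := hmem n han hnb
    have hb1 : χ ^ ρ ≤ C ^ ρ * (w₁ (τ n) (τ (n+1)) ^ ρ + w₂ (τ n) (τ (n+1)) ^ σ) := by
      rw [← weq n hlt]
      exact hbound _ _ han h1 h2
    have hw1le : w₁ (τ n) (τ (n+1)) ≤ w₁ a b := by
      have e1 := hw₁ a (τ n) (τ (n+1)) (le_refl _) han h1 h2
      have e2 := hw₁ a (τ (n+1)) b (le_refl _) (han.trans h1) h2 (le_refl _)
      have n1 := hw₁0 a (τ n) (le_refl _) han hnb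
      have n2 := hw₂0 a (τ n) (le_refl _) han hnb
      have n3 := hw₁0 (τ (n+1)) b (han.trans h1) h2 (le_refl _)
      linarith
    have hw1leρ : w₁ (τ n) (τ (n+1)) ^ ρ ≤ w₁ a b ^ ρ :=
      Real.rpow_le_rpow (hw₁0 _ _ han h1 h2) hw1le hρ.le
    have hkey : w₁ a b ^ ρ ≤ w₂ (τ n) (τ (n+1)) ^ σ := by
      have hCρ : 0 < C ^ ρ := Real.rpow_pos_of_pos hC _
      nlinarith [hb1, hχρ, hw1leρ]
    calc M = (w₁ a b ^ ρ) ^ (1/σ) := by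
            rw [hM, ← Real.rpow_mul hw₁pos.le]; ring_nf
      _ ≤ (w₂ (τ n) (τ (n+1)) ^ σ) ^ (1/σ) :=
            Real.rpow_le_rpow (Real.rpow_nonneg hw₁pos.le _) hkey (by positivity)
      _ = w₂ (τ n) (τ (n+1)) := by
            rw [← Real.rpow_mul (hw₂0 _ _ han h1 h2), mul_one_div, div_self hσ.ne',
              Real.rpow_one]
  -- accumulated estimate
  have acc : ∀ n : ℕ, τ (n+1) < b → ((n : ℝ) + 1) * M ≤ w₂ a (τ (n+1)) := by
    intro n
    induction n with
    | zero =>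
        intro hlt
        have := step 0 hlt
        rw [hτ0] at this
        push_cast
        linarith
    | succ m ih =>
        intro hlt
        have hmlt : τ (m+1) < b := lt_of_le_of_lt (hmono (m+1)) hlt
        have h1 := ih hmlt
        have h2 := step (m+1) hlt
        have h3 := hw₂ a (τ (m+1)) (τ (m+2)) (le_refl _) (hbnds (m+1)).1
          (hmono (m+1)) (hbnds (m+2)).2
        push_cast
        push_cast at h1
        linarith
  have part1 : ∀ n : ℕ, τ (n+1) < b → ((n : ℝ) + 1) * M ≤ w₂ a b := by
    intro n hlt
    have h1 := acc n hlt
    have h2 := hw₂ a (τ (n+1)) b (le_refl _) (hbnds (n+1)).1 hlt.le (le_refl _)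
    have h3 := hw₂0 (τ (n+1)) b (hbnds (n+1)).1 hlt.le (le_refl _)
    linarith
  refine ⟨part1, ?_⟩
  rintro ⟨k, hk0, hkb⟩
  have hNmem : sInf {k : ℕ | 0 < k ∧ τ k = b} ∈ {k : ℕ | 0 < k ∧ τ k = b} :=
    Nat.sInf_mem ⟨k, hk0, hkb⟩
  set N := sInf {k : ℕ | 0 < k ∧ τ k = b} with hN
  obtain ⟨hNpos, hNb⟩ := hNmem
  clear_value N
  rcases N with _ | _ | m
  · omega
  · have h0 := hw₂0 a b (le_refl _) hab.le (le_refl _)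
    push_cast
    nlinarith [hMnn]
  · have hlt : τ (m+1) < b := by
      rcases lt_or_eq_of_le (hbnds (m+1)).2 with h | h
      · exact h
      · exfalso
        have hmemS : m + 1 ∈ {k : ℕ | 0 < k ∧ τ k = b} := ⟨Nat.succ_pos m, h⟩
        have hle := Nat.sInf_le hmemS
        rw [← hN] at hle
        omega
    have hp := part1 m hlt
    push_cast
    push_cast at hp
    linarith
end

section
/- Let $w$ be a nonnegative, superadditive function on the pairs $(u,v)$ with $a\le u\le v\le b$, which is continuous and satisfies $w(u,u)=0$ for all $u$. Let $\chi>0$ and let $(\tau_n)_{n\ge0}$ be the greedy points of $w$ on $[a,b]$ with threshold $\chi$. Then for every $n\ge0$ with $\tau_{n+1}<b$ one has $w(\tau_k,\tau_{k+1})=\chi$ for all $0\le k\le n$ and $(n+1)\,\chi\le w(a,b)$; in particular, if $w(a,b)<\infty$ then $N:=\inf\{n>0:\tau_n=b\}$ is finite and satisfies $N\le \frac{w(a,b)}{\chi}+1$. -/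
open Topology Filter


/-- finiteness of the greedy point count.  Let `w` be a nonnegative,
superadditive, continuous function with `w(u,u) = 0` on the pairs
`a ≤ u ≤ v ≤ b`, and let `χ > 0`.  Then for every `n` with `τ_{n+1} < b`, one has
`w(τ_k, τ_{k+1}) = χ` for all `k ≤ n` and `(n+1)χ ≤ w(a,b)`; in particular (since
`w(a,b) < ∞`) the count `N = inf {n > 0 : τ_n = b}` is finite and satisfies
`N ≤ w(a,b)/χ + 1`. -/
theorem greedy_count_finite (a b χ : ℝ) (hab : a ≤ b) (hχ : 0 < χ)
    (w : ℝ → ℝ → ℝ)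
    (hw0 : ∀ u v, a ≤ u → u ≤ v → v ≤ b → 0 ≤ w u v)
    (hsup : ∀ u v r, a ≤ u → u ≤ v → v ≤ r → r ≤ b → w u v + w v r ≤ w u r)
    (hwc : ContinuousOn (fun p : ℝ × ℝ => w p.1 p.2)
      {p : ℝ × ℝ | a ≤ p.1 ∧ p.1 ≤ p.2 ∧ p.2 ≤ b})
    (hwd : ∀ u, a ≤ u → u ≤ b → w u u = 0) :
    (∀ n : ℕ, greedy w χ a b (n + 1) < b →
      (∀ k ≤ n, w (greedy w χ a b k) (greedy w χ a b (k + 1)) = χ) ∧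
        ((n : ℝ) + 1) * χ ≤ w a b) ∧
    ((∃ k : ℕ, 0 < k ∧ greedy w χ a b k = b) ∧
      ((sInf {k : ℕ | 0 < k ∧ greedy w χ a b k = b} : ℕ) : ℝ) ≤ w a b / χ + 1) := by
  set τ := greedy w χ a b with hτdef
  have hdef : ∀ n : ℕ, τ (n + 1) = sSup {t | τ n ≤ t ∧ t ≤ b ∧ w (τ n) t ≤ χ} :=
    fun n => rfl
  -- continuity in the second variable
  have hcont : ∀ n : ℕ, a ≤ τ n →
      ContinuousOn (fun t => w (τ n) t) (Set.Icc (τ n) b) := by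
    intro n ha'
    have hmap : Set.MapsTo (fun t : ℝ => ((τ n : ℝ), t)) (Set.Icc (τ n) b)
        {p : ℝ × ℝ | a ≤ p.1 ∧ p.1 ≤ p.2 ∧ p.2 ≤ b} := by
      intro t ht
      exact ⟨ha', ht.1, ht.2⟩
    exact hwc.comp ((continuous_const.prodMk continuous_id).continuousOn) hmap
  -- one-step properties
  have hstep : ∀ n : ℕ, a ≤ τ n → τ n ≤ b →
      τ n ≤ τ (n + 1) ∧ τ (n + 1) ≤ b ∧ w (τ n) (τ (n + 1)) ≤ χ := by
    intro n ha' hb'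
    set S := {t | τ n ≤ t ∧ t ≤ b ∧ w (τ n) t ≤ χ} with hS
    have hself : τ n ∈ S := ⟨le_refl _, hb', by rw [hwd (τ n) ha' hb']; exact hχ.le⟩
    have hbdd : BddAbove S := ⟨b, fun t ht => ht.2.1⟩
    have hSeq : S = Set.Icc (τ n) b ∩ (fun t => w (τ n) t) ⁻¹' Set.Iic χ := by
      ext t
      simp only [hS, Set.mem_setOf_eq, Set.mem_inter_iff, Set.mem_Icc, Set.mem_preimage,
        Set.mem_Iic, and_assoc]
    have hclosed : IsClosed S := by
      rw [hSeq]
      exact (hcont n ha').preimage_isClosed_of_isClosed isClosed_Icc isClosed_Iic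
    have hmem : sSup S ∈ S := hclosed.csSup_mem ⟨_, hself⟩ hbdd
    rw [hdef n]
    exact ⟨le_csSup hbdd hself, hmem.2.1, hmem.2.2⟩
  have hinv : ∀ n : ℕ, a ≤ τ n ∧ τ n ≤ b := by
    intro n
    induction n with
    | zero => exact ⟨le_refl a, hab⟩
    | succ n ih =>
      obtain ⟨h1, h2, _⟩ := hstep n ih.1 ih.2
      exact ⟨ih.1.trans h1, h2⟩
  -- exact threshold when not at the endpoint
  have heq : ∀ n : ℕ, τ (n + 1) < b → w (τ n) (τ (n + 1)) = χ := by
    intro n hlt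
    obtain ⟨ha', hb'⟩ := hinv n
    obtain ⟨h1, h2, h3⟩ := hstep n ha' hb'
    by_contra hne
    have hlt' : w (τ n) (τ (n + 1)) < χ := lt_of_le_of_ne h3 hne
    have hsub : Set.Ioc (τ (n + 1)) b ⊆ Set.Icc (τ n) b := fun t ht =>
      ⟨h1.trans ht.1.le, ht.2⟩
    have hcw : ContinuousWithinAt (fun t => w (τ n) t) (Set.Ioc (τ (n + 1)) b) (τ (n + 1)) :=
      ((hcont n ha') (τ (n + 1)) ⟨h1, h2⟩).mono hsub
    have hmem : (fun t => w (τ n) t) ⁻¹' Set.Iio χ ∈ 𝓝[Set.Ioc (τ (n + 1)) b] (τ (n + 1)) :=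
      hcw (Iio_mem_nhds hlt')
    have hne' : (𝓝[Set.Ioc (τ (n + 1)) b] (τ (n + 1))).NeBot :=
      left_nhdsWithin_Ioc_neBot hlt
    obtain ⟨t, htmem, ht⟩ := (hne'.nonempty_of_mem (inter_mem hmem self_mem_nhdsWithin))
    -- t ∈ preimage ∩ Ioc
    have htS : t ∈ {s | τ n ≤ s ∧ s ≤ b ∧ w (τ n) s ≤ χ} :=
      ⟨h1.trans ht.1.le, ht.2, htmem.le⟩
    have hbdd : BddAbove {s | τ n ≤ s ∧ s ≤ b ∧ w (τ n) s ≤ χ} := ⟨b, fun s hs => hs.2.1⟩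
    have : t ≤ τ (n + 1) := by rw [hdef n]; exact le_csSup hbdd htS
    exact absurd this (not_le.mpr ht.1)
  -- once at b, stay at b
  have hb_succ : ∀ n : ℕ, τ n = b → τ (n + 1) = b := by
    intro n hn
    have hSb : {t | τ n ≤ t ∧ t ≤ b ∧ w (τ n) t ≤ χ} = {b} := by
      ext t
      constructor
      · rintro ⟨h1, h2, _⟩
        rw [hn] at h1
        exact le_antisymm h2 h1
      · intro ht
        rw [Set.mem_singleton_iff] at ht
        simp only [Set.mem_setOf_eq, ht, hn]
        exact ⟨le_refl b, le_refl b, by rw [hwd b hab (le_refl b)]; exact hχ.le⟩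
    rw [hdef n, hSb, csSup_singleton]
  have habs : ∀ k m : ℕ, τ k = b → τ (k + m) = b := by
    intro k m hk
    induction m with
    | zero => exact hk
    | succ m ih => exact hb_succ _ ih
  have hlt_all : ∀ n : ℕ, τ (n + 1) < b → ∀ k, k ≤ n → τ (k + 1) < b := by
    intro n hn k hk
    rcases lt_or_eq_of_le (hinv (k + 1)).2 with h | h
    · exact h
    · exfalso
      have := habs (k + 1) (n - k) h
      rw [show k + 1 + (n - k) = n + 1 from by omega] at this
      exact hn.ne this
  -- accumulated lower bound
  have hsum : ∀ n : ℕ, τ (n + 1) < b → ((n : ℝ) + 1) * χ ≤ w a (τ (n + 1)) := by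
    intro n
    induction n with
    | zero =>
      intro h
      have := heq 0 h
      have hτ0 : τ 0 = a := rfl
      rw [hτ0] at this
      rw [this]
      norm_num
    | succ n ih =>
      intro h
      have h' : τ (n + 1) < b := hlt_all (n + 1) h n (Nat.le_succ n)
      have h1 := ih h'
      have he := heq (n + 1) h
      have hsupa := hsup a (τ (n + 1)) (τ (n + 2)) (le_refl a) (hinv (n + 1)).1
        (hstep (n + 1) (hinv (n + 1)).1 (hinv (n + 1)).2).1 (hinv (n + 2)).2
      push_cast
      linarith
  have hsum' : ∀ n : ℕ, τ (n + 1) < b → ((n : ℝ) + 1) * χ ≤ w a b := by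
    intro n h
    have h1 := hsum n h
    have h2 := hsup a (τ (n + 1)) b (le_refl a) (hinv (n + 1)).1 (hinv (n + 1)).2 (le_refl b)
    have h3 := hw0 (τ (n + 1)) b (hinv (n + 1)).1 (hinv (n + 1)).2 (le_refl b)
    linarith
  constructor
  · intro n hn
    exact ⟨fun k hk => heq k (hlt_all n hn k hk), hsum' n hn⟩
  · have hex : ∃ k : ℕ, 0 < k ∧ τ k = b := by
      by_contra hne
      push_neg at hne
      have hall : ∀ n : ℕ, τ (n + 1) < b := fun n =>
        lt_of_le_of_ne (hinv (n + 1)).2 (hne (n + 1) (Nat.succ_pos n))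
      obtain ⟨n, hn⟩ := exists_nat_gt (w a b / χ)
      have h1 := hsum' n (hall n)
      have h2 : w a b < n * χ := (div_lt_iff₀ hχ).mp hn
      linarith
    refine ⟨hex, ?_⟩
    have hNmem : 0 < sInf {k : ℕ | 0 < k ∧ τ k = b} ∧
        τ (sInf {k : ℕ | 0 < k ∧ τ k = b}) = b := Nat.sInf_mem hex
    set N := sInf {k : ℕ | 0 < k ∧ τ k = b} with hN
    clear_value N
    obtain ⟨hNpos, hNb⟩ := hNmem
    have hwab : 0 ≤ w a b := hw0 a b (le_refl a) hab (le_refl b)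
    rcases Nat.lt_or_ge N 2 with h2 | h2
    · have hN1 : N = 1 := by omega
      rw [hN1]
      have : 0 ≤ w a b / χ := div_nonneg hwab hχ.le
      push_cast
      linarith
    · have hnot : N - 1 ∉ {k : ℕ | 0 < k ∧ τ k = b} :=
        Nat.notMem_of_lt_sInf (hN ▸ (show N - 1 < N from by omega))
      have hne' : τ (N - 1) ≠ b := fun h => hnot ⟨by omega, h⟩
      have hlt : τ (N - 2 + 1) < b := by
        rw [show N - 2 + 1 = N - 1 from by omega]
        exact lt_of_le_of_ne (hinv (N - 1)).2 hne'
      have := hsum' (N - 2) hlt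
      have hcast : ((N - 2 : ℕ) : ℝ) = (N : ℝ) - 2 := by
        have : (2 : ℕ) ≤ N := h2
        push_cast [Nat.cast_sub this]
        ring
      rw [hcast] at this
      have hdiv : (N : ℝ) - 1 ≤ w a b / χ := (le_div_iff₀ hχ).mpr (by linarith)
      linarith
end
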